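/- For every integer g ≥ 3: gcd(2g−3, 4g−4) = 1, (2g−3)² ≡ 1 (mod 4g−4), and the tuple (4g−4, 0; (1, 4g−4), (2g−3, 4g−4), (1, 2)) is a cyclic data set of degree 4(g−1) and genus g−1 whose two fixed points (1, 4g−4) and (2g−3, 4g−4) are compatible with twist factor 2(g−1): indeed 1 + (2g−3) = 2(g−1) modulo 4(g−1). -/

import Mathlib

/-- A *cyclic data set* of degree `n` and genus `g` (Definition 2.1 of the paper), with
orbifold genus `g₀` and cone-point data `C = [(c₁,n₁), …, (c_k,n_k)]`: `n ≥ 2`, `k ≥ 1`,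
each `nᵢ ≥ 2` divides `n` with `gcd(cᵢ, nᵢ) = 1`; omitting any `nᵢ` does not change the
lcm of the `nⱼ`'s; if `g₀ = 0` then that lcm equals `n`; `Σᵢ (n/nᵢ)·cᵢ ≡ 0 (mod n)`;
and the Riemann–Hurwitz formula `2g − 2 = n(2g₀ − 2) + Σᵢ (n − n/nᵢ)` holds. -/
def IsCyclicDataSet (n g₀ g : ℕ) (C : List (ℤ × ℕ)) : Prop :=
  2 ≤ n ∧ C ≠ [] ∧
  (∀ p ∈ C, 2 ≤ p.2 ∧ p.2 ∣ n ∧ Int.gcd p.1 (p.2 : ℤ) = 1) ∧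
  (∀ i < C.length,
    ((C.map Prod.snd).eraseIdx i).foldr Nat.lcm 1 = (C.map Prod.snd).foldr Nat.lcm 1) ∧
  (g₀ = 0 → (C.map Prod.snd).foldr Nat.lcm 1 = n) ∧
  ((n : ℤ) ∣ (C.map (fun p => ((n : ℤ) / (p.2 : ℤ)) * p.1)).sum) ∧
  (2 * (g : ℤ) - 2 =
    (n : ℤ) * (2 * (g₀ : ℤ) - 2) + (C.map (fun p => (n : ℤ) - (n : ℤ) / (p.2 : ℤ))).sum)

/-! With `a = 2g − 3` odd, `a² − 1 = (a − 1)(a + 1)` is divisible by `2(a + 1) = 4g − 4`; this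
gives both the congruence and, since it exhibits `a` as a unit modulo `4g − 4`, the coprimality.
The remaining conditions on the data set are arithmetic in `n = 4m`, `m = g − 1`: the sum
`Σ (n/nᵢ)cᵢ = 1 + (2m − 1) + 2m` is `n`, and Riemann–Hurwitz reads
`2m − 2 = −2n + 2(n − 1) + n/2`. -/

theorem Int.sq_modEq_one_of_odd {a : ℤ} (ha : Odd a) : a ^ 2 ≡ 1 [ZMOD 2 * (a + 1)] := by
  obtain ⟨k, rfl⟩ := ha
  exact Int.modEq_iff_dvd.mpr ⟨-k, by ring⟩

theorem Int.isCoprime_of_sq_modEq_one {a n : ℤ} (h : a ^ 2 ≡ 1 [ZMOD n]) : IsCoprime a n := by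
  obtain ⟨k, hk⟩ := Int.modEq_iff_dvd.mp h
  exact ⟨a, k, by linear_combination -hk⟩

theorem List.foldr_lcm_eq_of_mem_of_forall_dvd {L : List ℕ} {n : ℕ} (hn : n ∈ L)
    (hdvd : ∀ x ∈ L, x ∣ n) : L.foldr Nat.lcm 1 = n :=
  show (L : Multiset ℕ).lcm = n from
    Nat.dvd_antisymm (Multiset.lcm_dvd.mpr hdvd) (Multiset.dvd_lcm (s := (L : Multiset ℕ)) hn)

theorem isCyclicDataSet_four_mul {m : ℕ} (hm : 1 ≤ m) :
    IsCyclicDataSet (4 * m) 0 m [(1, 4 * m), (2 * (m : ℤ) - 1, 4 * m), (1, 2)] := by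
  have hcop : IsCoprime (2 * (m : ℤ) - 1) (4 * m) := by
    have hsq := Int.sq_modEq_one_of_odd (a := 2 * (m : ℤ) - 1) ⟨m - 1, by ring⟩
    rw [show 2 * (2 * (m : ℤ) - 1 + 1) = 4 * m by ring] at hsq
    exact Int.isCoprime_of_sq_modEq_one hsq
  have htwo : 2 ∣ 4 * m := ⟨2 * m, by ring⟩
  have hdiv : ((4 * m : ℕ) : ℤ) / ((4 * m : ℕ) : ℤ) = 1 := Int.ediv_self (by omega)
  refine ⟨by omega, List.cons_ne_nil _ _, ?_, ?_, ?_, ?_, ?_⟩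
  · simp only [List.mem_cons, List.not_mem_nil, or_false]
    rintro p (rfl | rfl | rfl)
    · exact ⟨by omega, dvd_rfl, Int.gcd_one_left _⟩
    · exact ⟨by omega, dvd_rfl, by exact_mod_cast Int.isCoprime_iff_gcd_eq_one.mp hcop⟩
    · exact ⟨le_rfl, htwo, Int.gcd_one_left _⟩
  · intro i hi
    simp only [List.map_cons, List.map_nil, List.length_cons, List.length_nil] at hi ⊢
    rw [List.foldr_lcm_eq_of_mem_of_forall_dvd (L := [4 * m, 4 * m, 2]) (n := 4 * m) (by simp)
      (by simp [htwo])]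
    interval_cases i <;> exact List.foldr_lcm_eq_of_mem_of_forall_dvd (by simp) (by simp [htwo])
  · exact fun _ => List.foldr_lcm_eq_of_mem_of_forall_dvd (by simp) (by simp [htwo])
  · simp only [List.map_cons, List.map_nil, List.sum_cons, List.sum_nil, hdiv]
    exact ⟨1, by push_cast; omega⟩
  · simp only [List.map_cons, List.map_nil, List.sum_cons, List.sum_nil, hdiv]
    push_cast
    omega

/-- For every integer `g ≥ 3`: `gcd(2g−3, 4g−4) = 1`,
`(2g−3)² ≡ 1 (mod 4g−4)`, and the tuple `(4g−4, 0; (1, 4g−4), (2g−3, 4g−4), (1, 2))` is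
a cyclic data set of degree `4(g−1)` and genus `g−1` whose two fixed points
`(1, 4g−4)` and `(2g−3, 4g−4)` are compatible with twist factor `2(g−1)`:
indeed `1 + (2g−3) = 2(g−1)` modulo `4(g−1)`. -/
theorem stmt_14 (g : ℕ) (hg : 3 ≤ g) :
    Nat.gcd (2*g - 3) (4*g - 4) = 1 ∧
    (2*(g:ℤ) - 3)^2 ≡ 1 [ZMOD 4*(g:ℤ) - 4] ∧
    IsCyclicDataSet (4*(g - 1)) 0 (g - 1)
      [(1, 4*g - 4), (2*(g:ℤ) - 3, 4*g - 4), (1, 2)] ∧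
    1 + (2*(g:ℤ) - 3) ≡ 2*((g:ℤ) - 1) [ZMOD 4*((g:ℤ) - 1)] := by
  have hsq : (2*(g:ℤ) - 3)^2 ≡ 1 [ZMOD 4*(g:ℤ) - 4] := by
    convert Int.sq_modEq_one_of_odd (a := 2*(g:ℤ) - 3) ⟨g - 2, by ring⟩ using 2
    ring
  refine ⟨?_, hsq, ?_, ?_⟩
  · have hcast : ((2*g - 3 : ℕ) : ℤ) = 2*g - 3 ∧ ((4*g - 4 : ℕ) : ℤ) = 4*g - 4 := by omega
    rw [← Int.gcd_natCast_natCast, hcast.1, hcast.2, ← Int.isCoprime_iff_gcd_eq_one]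
    exact Int.isCoprime_of_sq_modEq_one hsq
  · rw [show 4*g - 4 = 4*(g - 1) by omega, show 2*(g:ℤ) - 3 = 2*((g - 1 : ℕ) : ℤ) - 1 by omega]
    exact isCyclicDataSet_four_mul (by omega)
  · rw [show 1 + (2*(g:ℤ) - 3) = 2*((g:ℤ) - 1) by ring]
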